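/- arXiv:1706.03617 — 2 statements merged into one kernel-verified Lean document; each statement's English description precedes it below -/
import Mathlib

section
/- For all integers n ≥ 0, pl̄(4n+3) ≡ 0 (mod 4). -/
/-!
Modulo 4, `(1+q^k)/(1-q^k) = 1 + 2 ∑_{m≥1} q^{km}`, and in a ring with `4 = 0` we have
`(1+2h)^2 = 1` and `(1+2h)(1+2h') = 1 + 2(h+h')`. Hence, for `N ≥ 1`,
`pl̄(N) ≡ 2 · #{odd divisors of N} (mod 4)`. For `N = 4n+3` every divisor is odd, and since `N`
is not a square, `d ↦ N/d` pairs the divisors without fixed points, so their number is even.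
-/

open PowerSeries

/-- The formal power series `(1+q^k)/(1-q^k)` in `ℤ⟦q⟧`. -/
noncomputable def fps (k : ℕ) : PowerSeries ℤ :=
  (1 + (PowerSeries.X : PowerSeries ℤ) ^ k) *
    PowerSeries.invOfUnit (1 - (PowerSeries.X : PowerSeries ℤ) ^ k) 1

/-- The number of overpartitions of `n`: the coefficient of `q^n` in
`∏_{k≥1} (1+q^k)/(1-q^k)`.  Since each factor with `k > n` contributes only `1`
to coefficients up to degree `n`, the product may be truncated at `k = n`. -/
noncomputable def pbar (n : ℕ) : ℤ :=
  PowerSeries.coeff (R := ℤ) n (∏ k ∈ Finset.Icc 1 n, fps k)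

/-- The number of plane overpartitions of `n`: the coefficient of `q^n` in
`∏_{k≥1} ((1+q^k)/(1-q^k))^k`, truncated at `k = n` (factors with `k > n` do not
affect coefficients up to degree `n`). -/
noncomputable def plbar (n : ℕ) : ℤ :=
  PowerSeries.coeff (R := ℤ) n (∏ k ∈ Finset.Icc 1 n, fps k ^ k)

open Finset

section FourEqZero

variable {R : Type*} [CommRing R]

theorem one_add_two_mul_sq (h4 : (4 : R) = 0) (x : R) : (1 + 2 * x) ^ 2 = 1 := by
  linear_combination (x + x ^ 2) * h4

theorem one_add_two_mul_pow (h4 : (4 : R) = 0) (x : R) (k : ℕ) :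
    (1 + 2 * x) ^ k = if Odd k then 1 + 2 * x else 1 := by
  obtain ⟨m, rfl | rfl⟩ := Nat.even_or_odd' k
  · simp [pow_mul, one_add_two_mul_sq h4]
  · simp [pow_succ, pow_mul, one_add_two_mul_sq h4]

theorem prod_one_add_two_mul (h4 : (4 : R) = 0) {ι : Type*} (s : Finset ι) (f : ι → R) :
    ∏ i ∈ s, (1 + 2 * f i) = 1 + 2 * ∑ i ∈ s, f i := by
  classical
  induction s using Finset.cons_induction with
  | empty => simp
  | cons a s _ ih =>
    rw [prod_cons, ih, sum_cons]
    linear_combination f a * (∑ i ∈ s, f i) * h4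

end FourEqZero

namespace PowerSeries

variable (R : Type*)

noncomputable def multiplesSeries [Semiring R] (k : ℕ) : R⟦X⟧ :=
  mk fun m => if m ≠ 0 ∧ k ∣ m then 1 else 0

variable {R}

@[simp]
theorem coeff_multiplesSeries [Semiring R] (k m : ℕ) :
    coeff m (multiplesSeries R k) = if m ≠ 0 ∧ k ∣ m then 1 else 0 :=
  coeff_mk _ _

@[simp]
theorem map_multiplesSeries [Semiring R] {S : Type*} [Semiring S] (f : R →+* S) (k : ℕ) :
    map f (multiplesSeries R k) = multiplesSeries S k := by
  ext m
  simp [apply_ite f]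

theorem one_sub_X_pow_mul_multiplesSeries [Ring R] {k : ℕ} (hk : k ≠ 0) :
    (1 - X ^ k) * multiplesSeries R k = X ^ k := by
  ext m
  rw [sub_mul, one_mul, map_sub, coeff_X_pow_mul', coeff_X_pow, coeff_multiplesSeries]
  rcases lt_trichotomy m k with hlt | rfl | hgt
  · have : ¬(m ≠ 0 ∧ k ∣ m) := fun h => h.1 (Nat.eq_zero_of_dvd_of_lt h.2 hlt)
    simp [this, hlt.ne, hlt.not_ge]
  · simp [hk]
  · have : m - k ≠ 0 := by omega
    simp [hgt.le, hgt.ne', hgt.not_ge, this, (Nat.zero_le k).trans_lt hgt |>.ne']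

end PowerSeries

theorem fps_eq_one_add_two_mul_multiplesSeries {k : ℕ} (hk : k ≠ 0) :
    fps k = 1 + 2 * multiplesSeries ℤ k := by
  have hunit : (1 - X ^ k : ℤ⟦X⟧) * invOfUnit (1 - X ^ k) 1 = 1 :=
    mul_invOfUnit _ _ (by simp [zero_pow hk])
  have hmul : (1 + X ^ k : ℤ⟦X⟧) = (1 - X ^ k) * (1 + 2 * multiplesSeries ℤ k) := by
    linear_combination (-2 : ℤ⟦X⟧) * one_sub_X_pow_mul_multiplesSeries (R := ℤ) hk
  rw [fps, hmul, mul_comm, ← mul_assoc, mul_comm _ (1 - X ^ k), hunit, one_mul]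

theorem Nat.even_card_divisors_of_not_isSquare {n : ℕ} (hn : ¬IsSquare n) : Even #n.divisors := by
  have hn0 : n ≠ 0 := by rintro rfl; exact hn ⟨0, rfl⟩
  rw [← ZMod.natCast_eq_zero_iff_even, ← Nat.smul_one_eq_cast, ← sum_const]
  refine sum_involution (fun d _ => n / d) (fun _ _ => by decide) (fun d hd _ hdd => ?_)
    (fun d hd => ?_) (fun d hd => Nat.div_div_self (Nat.dvd_of_mem_divisors hd) hn0)
  · exact hn ⟨d, by rw [← Nat.div_mul_cancel (Nat.dvd_of_mem_divisors hd), hdd]⟩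
  · exact Nat.mem_divisors.2 ⟨Nat.div_dvd_of_dvd (Nat.dvd_of_mem_divisors hd), hn0⟩

theorem not_isSquare_of_mod_four_eq_three {n : ℕ} (hn : n % 4 = 3) : ¬IsSquare n := by
  rintro ⟨r, rfl⟩
  obtain ⟨t, rfl | rfl⟩ := Nat.even_or_odd' r <;> ring_nf at hn <;> omega

theorem plbar_modEq_two_mul_card_odd_divisors {N : ℕ} (hN : N ≠ 0) :
    plbar N ≡ 2 * #{d ∈ N.divisors | Odd d} [ZMOD 4] := by
  refine (ZMod.intCast_eq_intCast_iff _ _ 4).1 ?_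
  have h4 : (4 : (ZMod 4)⟦X⟧) = 0 := by
    rw [← map_ofNat C 4, show (4 : ZMod 4) = 0 from rfl, map_zero]
  have hprod : map (Int.castRingHom (ZMod 4)) (∏ k ∈ Icc 1 N, fps k ^ k)
      = 1 + 2 * ∑ k ∈ Icc 1 N with Odd k, multiplesSeries (ZMod 4) k := by
    rw [← prod_one_add_two_mul h4, prod_filter, map_prod]
    refine prod_congr rfl fun k hk => ?_
    have hk0 : k ≠ 0 := by rw [mem_Icc] at hk; omega
    rw [map_pow, fps_eq_one_add_two_mul_multiplesSeries hk0, map_add, map_one, map_mul, map_ofNat,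
      map_multiplesSeries, one_add_two_mul_pow h4]
  have hdivisors : {k ∈ Icc 1 N | Odd k ∧ k ∣ N} = {d ∈ N.divisors | Odd d} := by
    ext d
    simp only [mem_filter, mem_Icc, Nat.mem_divisors]
    constructor
    · rintro ⟨-, hodd, hdvd⟩
      exact ⟨⟨hdvd, hN⟩, hodd⟩
    · rintro ⟨⟨hdvd, -⟩, hodd⟩
      exact ⟨⟨hodd.pos, Nat.le_of_dvd (Nat.pos_of_ne_zero hN) hdvd⟩, hodd, hdvd⟩
  calc ((plbar N : ℤ) : ZMod 4)
        = coeff N (map (Int.castRingHom (ZMod 4)) (∏ k ∈ Icc 1 N, fps k ^ k)) := by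
        rw [coeff_map]; rfl
    _ = 2 * #{k ∈ Icc 1 N | Odd k ∧ k ∣ N} := by
        rw [hprod, map_add, coeff_one, if_neg hN, zero_add, ← map_ofNat C 2, coeff_C_mul, map_sum]
        simp [sum_boole, filter_filter, hN]
    _ = _ := by rw [hdivisors]; push_cast; rfl

/-- For all `n ≥ 0`, `pl̄(4n+3) ≡ 0 (mod 4)`. -/
theorem plbar_four_n_three_mod_four (n : ℕ) :
    plbar (4 * n + 3) ≡ 0 [ZMOD 4] := by
  have hodd : ∀ d ∈ (4 * n + 3).divisors, Odd d := fun d hd =>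
    (Nat.odd_iff.2 (by omega)).of_dvd_nat (Nat.dvd_of_mem_divisors hd)
  have hsq : ¬IsSquare (4 * n + 3) := not_isSquare_of_mod_four_eq_three (by omega)
  obtain ⟨m, hm⟩ := Nat.even_card_divisors_of_not_isSquare hsq
  refine (plbar_modEq_two_mul_card_odd_divisors (by omega)).trans ?_
  rw [filter_true_of_mem hodd, hm, Int.modEq_zero_iff_dvd]
  exact ⟨m, by push_cast; ring⟩
end

section
/- For all integers α ≥ 3, β ≥ 1, and n ≥ 0, pl̄_5(2^α·3^β·n + 5) ≡ 0 (mod 8), where pl̄_5 counts plane overpartitions with at most 5 rows. -/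
open PowerSeries

/-- The number of plane overpartitions of `n` with at most `K` rows: the coefficient
of `q^n` in `∏_{k≥1} ((1+q^k)/(1-q^k))^(min K k)`, truncated at `k = n`. -/
noncomputable def plbark (K n : ℕ) : ℤ :=
  PowerSeries.coeff (R := ℤ) n (∏ k ∈ Finset.Icc 1 n, fps k ^ min K k)

/-!
Gauss's identity `∏_{k ≥ 1} (1 - q^k) / (1 + q^k) = φ(-q) = 1 + 2 ∑_{s ≥ 1} (-1)^s q^{s²}`,
obtained from the finite Jacobi triple product at `z = -1`, gives modulo 8 the overpartition series
`P̄ ≡ (1 + 2S)⁻¹ ≡ 1 - 2S + 4S²` with `S = ∑_{s ≥ 1} (-1)^s q^{s²}`. As `4S² ≡ 4 ∑_s q^{2s²}`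
modulo 8, `p̄(m) ≡ 0 (mod 8)` for odd non-squares `m`.

Each factor `F_k = (1 + q^k)/(1 - q^k) = 1 + 2 q^k/(1 - q^k)` satisfies `F_k⁴ ≡ 1 (mod 8)`, so the
generating function of `pl̄₅` is `P̄ · F₂ F₃² F₄³` modulo 8. Expanding `F₂ F₃² F₄³` in the Lambert
terms `q^k/(1 - q^k)`, the extra contributions to the coefficient of `q^m` vanish for
`m ≡ 5 (mod 12)` by parity, by `3 ∤ m`, and because squares are `0, 1 (mod 4)`. Finally
`2^α 3^β n + 5 ≡ 5 (mod 24)`.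
-/

open Finset

theorem Finset.prod_Icc_two_mul {M : Type*} [CommMonoid M] (f : ℕ → M) (n : ℕ) :
    ∏ k ∈ Icc 1 (2 * n), f k = (∏ k ∈ Icc 1 n, f (2 * k)) * ∏ k ∈ range n, f (2 * k + 1) := by
  induction n with
  | zero => simp
  | succ n ih =>
    rw [show 2 * (n + 1) = 2 * n + 1 + 1 by ring, prod_Icc_succ_top (by omega),
      prod_Icc_succ_top (by omega), ih, prod_Icc_succ_top (by omega), prod_range_succ,
      show 2 * n + 1 + 1 = 2 * (n + 1) by ring]
    ac_rfl

section Truncation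

theorem smodEq_span_singleton_iff {A : Type*} [CommRing A] {a x y : A} :
    x ≡ y [SMOD Ideal.span {a}] ↔ a ∣ x - y := by
  rw [SModEq.sub_mem, Ideal.mem_span_singleton]

theorem prod_Icc_smodEq_prod_Icc {A : Type*} [CommRing A] {I : Ideal A} {f : ℕ → A} {m M : ℕ}
    (h : m ≤ M) (hf : ∀ k ∈ Ioc m M, f k ≡ 1 [SMOD I]) :
    ∏ k ∈ Icc 1 M, f k ≡ ∏ k ∈ Icc 1 m, f k [SMOD I] := by
  have hsplit : ∏ k ∈ Icc 1 M, f k = (∏ k ∈ Icc 1 m, f k) * ∏ k ∈ Ioc m M, f k :=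
    (prod_Ioc_consecutive _ (Nat.zero_le m) h).symm
  have h := (SModEq.rfl (x := ∏ k ∈ Icc 1 m, f k)).mul (SModEq.prod hf)
  rwa [prod_const_one, mul_one, ← hsplit] at h

variable {R : Type*} [CommRing R]

theorem PowerSeries.coeff_eq_of_smodEq {t i : ℕ} {f g : R⟦X⟧}
    (h : f ≡ g [SMOD Ideal.span {X ^ t}]) (hi : i < t) : coeff i f = coeff i g := by
  rw [smodEq_span_singleton_iff, X_pow_dvd_iff] at h
  simpa [sub_eq_zero] using h i hi

theorem PowerSeries.smodEq_X_pow_of_le {s t : ℕ} (h : s ≤ t) {f g : R⟦X⟧}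
    (hfg : f ≡ g [SMOD Ideal.span {X ^ t}]) : f ≡ g [SMOD Ideal.span {X ^ s}] :=
  hfg.mono (Ideal.span_singleton_le_span_singleton.mpr (pow_dvd_pow X h))

theorem PowerSeries.add_X_pow_mul_smodEq {t k : ℕ} (h : t ≤ k) (f g : R⟦X⟧) :
    f + X ^ k * g ≡ f [SMOD Ideal.span {X ^ t}] := by
  rw [smodEq_span_singleton_iff, add_sub_cancel_left]
  exact (pow_dvd_pow X h).mul_right g

end Truncation

section Geometric

variable {R : Type*} [CommRing R]

theorem PowerSeries.one_sub_X_pow_mul_invOfUnit {k : ℕ} (hk : k ≠ 0) :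
    (1 - X ^ k : R⟦X⟧) * invOfUnit (1 - X ^ k) 1 = 1 :=
  mul_invOfUnit _ _ (by simp [zero_pow hk])

theorem PowerSeries.coeff_invOfUnit_one_sub_X_pow {k : ℕ} (hk : k ≠ 0) (n : ℕ) :
    coeff n (invOfUnit (1 - X ^ k : R⟦X⟧) 1) = if k ∣ n then 1 else 0 := by
  suffices h : mk (fun n ↦ if k ∣ n then (1 : R) else 0) * (1 - X ^ k) = 1 by
    rw [← left_inv_eq_right_inv h (one_sub_X_pow_mul_invOfUnit hk), coeff_mk]
  ext n
  rw [mul_sub, mul_one, map_sub, coeff_mul_X_pow', coeff_mk, coeff_one]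
  rcases Nat.eq_zero_or_pos n with rfl | hn
  · simp [hk]
  · have hdvd : k ≤ n → (k ∣ n - k ↔ k ∣ n) := fun h ↦ Nat.dvd_sub_iff_left h dvd_rfl
    split_ifs <;> simp_all [Nat.le_of_dvd hn]

end Geometric

section GaussianBinomial

noncomputable def gaussBinom : ℕ → ℕ → Polynomial ℤ
  | _, 0 => 1
  | 0, _ + 1 => 0
  | m + 1, i + 1 => Polynomial.X ^ (i + 1) * gaussBinom m (i + 1) + gaussBinom m i

noncomputable def qPochhammer (j : ℕ) : Polynomial ℤ :=
  ∏ k ∈ Icc 1 j, (1 - Polynomial.X ^ k)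

@[simp]
theorem gaussBinom_zero_right (m : ℕ) : gaussBinom m 0 = 1 := by
  cases m <;> rfl

theorem gaussBinom_succ_succ (m i : ℕ) :
    gaussBinom (m + 1) (i + 1) = Polynomial.X ^ (i + 1) * gaussBinom m (i + 1) + gaussBinom m i :=
  rfl

theorem gaussBinom_eq_zero_of_lt {m i : ℕ} (h : m < i) : gaussBinom m i = 0 := by
  induction m generalizing i with
  | zero => obtain ⟨i, rfl⟩ := Nat.exists_eq_add_of_lt h; rfl
  | succ m ih =>
    obtain ⟨i, rfl⟩ := Nat.exists_eq_add_of_lt (Nat.zero_lt_of_lt h)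
    rw [gaussBinom_succ_succ, ih (by omega), ih (by omega), mul_zero, add_zero]

@[simp]
theorem gaussBinom_self (m : ℕ) : gaussBinom m m = 1 := by
  induction m with
  | zero => rfl
  | succ m ih =>
    rw [gaussBinom_succ_succ, gaussBinom_eq_zero_of_lt (by omega), ih, mul_zero, zero_add]

@[simp]
theorem qPochhammer_zero : qPochhammer 0 = 1 := rfl

theorem qPochhammer_succ (j : ℕ) :
    qPochhammer (j + 1) = qPochhammer j * (1 - Polynomial.X ^ (j + 1)) :=
  prod_Icc_succ_top (by omega) _

theorem qPochhammer_ne_zero (j : ℕ) : qPochhammer j ≠ 0 := by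
  refine prod_ne_zero_iff.mpr fun k hk h ↦ ?_
  have hk0 : 0 ≠ k := by have := (mem_Icc.mp hk).1; omega
  simpa [Polynomial.coeff_X_pow, hk0] using congrArg (Polynomial.coeff · 0) h

theorem gaussBinom_mul_qPochhammer {m i : ℕ} (h : i ≤ m) :
    gaussBinom m i * qPochhammer i * qPochhammer (m - i) = qPochhammer m := by
  induction m generalizing i with
  | zero => obtain rfl := Nat.le_zero.mp h; simp
  | succ m ih =>
    rcases i with _ | i
    · simp
    rcases (Nat.lt_succ_iff.mp h).lt_or_eq with hi | rfl
    · have hsub : m + 1 - (i + 1) = (m - (i + 1)) + 1 := by omega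
      calc gaussBinom (m + 1) (i + 1) * qPochhammer (i + 1) * qPochhammer (m + 1 - (i + 1))
          = Polynomial.X ^ (i + 1) * (1 - Polynomial.X ^ (m - i))
                * (gaussBinom m (i + 1) * qPochhammer (i + 1) * qPochhammer (m - (i + 1)))
              + (1 - Polynomial.X ^ (i + 1))
                * (gaussBinom m i * qPochhammer i * qPochhammer (m - i)) := by
            rw [gaussBinom_succ_succ, hsub, qPochhammer_succ (m - (i + 1)), qPochhammer_succ i,
              show m - (i + 1) + 1 = m - i by omega, show m - i = m - (i + 1) + 1 by omega,
              qPochhammer_succ (m - (i + 1))]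
            ring
        _ = qPochhammer m * (1 - Polynomial.X ^ (m + 1)) := by
            rw [ih hi.le, ih (by omega), show m + 1 = (i + 1) + (m - i) by omega, pow_add]
            ring
        _ = qPochhammer (m + 1) := (qPochhammer_succ m).symm
    · simp

theorem gaussBinom_succ_succ' (m i : ℕ) :
    gaussBinom (m + 1) (i + 1)
      = gaussBinom m (i + 1) + Polynomial.X ^ (m - i) * gaussBinom m i := by
  rcases lt_trichotomy i m with hi | rfl | hi
  · refine mul_right_cancel₀
      (mul_ne_zero (qPochhammer_ne_zero (i + 1)) (qPochhammer_ne_zero (m - i))) ?_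
    have hsub : m - i = (m - (i + 1)) + 1 := by omega
    calc gaussBinom (m + 1) (i + 1) * (qPochhammer (i + 1) * qPochhammer (m - i))
        = qPochhammer m * (1 - Polynomial.X ^ (m + 1)) := by
          rw [← qPochhammer_succ, ← gaussBinom_mul_qPochhammer (Nat.succ_le_succ hi.le),
            Nat.succ_sub_succ, mul_assoc]
      _ = (1 - Polynomial.X ^ (m - i))
              * (gaussBinom m (i + 1) * qPochhammer (i + 1) * qPochhammer (m - (i + 1)))
            + Polynomial.X ^ (m - i) * (1 - Polynomial.X ^ (i + 1))
              * (gaussBinom m i * qPochhammer i * qPochhammer (m - i)) := by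
          rw [gaussBinom_mul_qPochhammer hi, gaussBinom_mul_qPochhammer hi.le,
            show m + 1 = (m - i) + (i + 1) by omega, pow_add]
          ring
      _ = _ := by
          rw [qPochhammer_succ i, hsub, qPochhammer_succ (m - (i + 1)), ← hsub]
          ring
  · simp [gaussBinom_eq_zero_of_lt]
  · simp [gaussBinom_eq_zero_of_lt, hi, hi.trans (Nat.lt_succ_self i)]

theorem gaussBinom_add_two_one (m : ℕ) :
    gaussBinom (m + 2) 1 = Polynomial.X * gaussBinom m 1 + (Polynomial.X ^ (m + 1) + 1) := by
  rw [gaussBinom_succ_succ (m + 1) 0, gaussBinom_succ_succ' m 0]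
  simp only [gaussBinom_zero_right, Nat.sub_zero]
  ring

theorem gaussBinom_add_two_add_two (m j : ℕ) :
    gaussBinom (m + 2) (j + 2) = Polynomial.X ^ (j + 2) * gaussBinom m (j + 2)
      + (Polynomial.X ^ (m + 1) + 1) * gaussBinom m (j + 1)
      + Polynomial.X ^ (m - j) * gaussBinom m j := by
  rw [gaussBinom_succ_succ (m + 1) (j + 1), gaussBinom_succ_succ' m (j + 1),
    gaussBinom_succ_succ' m j]
  rcases lt_or_ge m (j + 1) with hj | hj
  · simp [gaussBinom_eq_zero_of_lt hj, gaussBinom_eq_zero_of_lt (show m < j + 2 by omega)]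
  · rw [show m + 1 = (j + 2) + (m - (j + 1)) by omega, pow_add]
    ring

end GaussianBinomial

section JacobiTripleProduct

variable {R : Type*} [CommRing R]

theorem Nat.cast_dist_sq (n i : ℕ) : ((Nat.dist n i : ℤ)) ^ 2 = ((n : ℤ) - i) ^ 2 := by
  rcases le_total n i with h | h
  · rw [Nat.dist_eq_sub_of_le h, Nat.cast_sub h]; ring
  · rw [Nat.dist_eq_sub_of_le_right h, Nat.cast_sub h]

theorem pow_mul_pow_dist_sq_eq (q : R) {a b x y x' y' : ℕ}
    (h : (a : ℤ) + ((x : ℤ) - y) ^ 2 = b + ((x' : ℤ) - y') ^ 2) :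
    q ^ a * q ^ (Nat.dist x y ^ 2) = q ^ b * q ^ (Nat.dist x' y' ^ 2) := by
  rw [← pow_add, ← pow_add]
  congr 1
  zify
  rwa [Nat.cast_dist_sq, Nat.cast_dist_sq]

noncomputable def tripleProduct (q : R) (n : ℕ) : Polynomial R :=
  ∏ k ∈ range n, (1 + Polynomial.C (q ^ (2 * k + 1)) * Polynomial.X)
    * (Polynomial.X + Polynomial.C (q ^ (2 * k + 1)))

noncomputable def tripleProductCoeff (q : R) (n i : ℕ) : R :=
  (gaussBinom (2 * n) i).eval₂ (Int.castRingHom R) (q ^ 2) * q ^ (Nat.dist n i ^ 2)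

theorem tripleProductCoeff_eq_zero_of_lt (q : R) {n i : ℕ} (h : 2 * n < i) :
    tripleProductCoeff q n i = 0 := by
  simp [tripleProductCoeff, gaussBinom_eq_zero_of_lt h]

theorem tripleProductCoeff_succ_zero (q : R) (n : ℕ) :
    tripleProductCoeff q (n + 1) 0 = q ^ (2 * n + 1) * tripleProductCoeff q n 0 := by
  simp only [tripleProductCoeff, gaussBinom_zero_right, Polynomial.eval₂_one, one_mul,
    Nat.dist_zero_right]
  ring

theorem tripleProductCoeff_succ_one (q : R) (n : ℕ) :
    tripleProductCoeff q (n + 1) 1 = q ^ (2 * n + 1) * tripleProductCoeff q n 1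
      + (1 + q ^ (2 * (2 * n + 1))) * tripleProductCoeff q n 0 := by
  have e : q ^ 2 * q ^ (Nat.dist n 0 ^ 2) = q ^ (2 * n + 1) * q ^ (Nat.dist n 1 ^ 2) :=
    pow_mul_pow_dist_sq_eq q (by push_cast; ring)
  simp only [tripleProductCoeff, show 2 * (n + 1) = 2 * n + 2 by ring, gaussBinom_add_two_one,
    gaussBinom_zero_right, Nat.dist_add_add_right n 1 0, Polynomial.eval₂_add,
    Polynomial.eval₂_mul, Polynomial.eval₂_pow, Polynomial.eval₂_one, Polynomial.eval₂_X]
  linear_combination (gaussBinom (2 * n) 1).eval₂ (Int.castRingHom R) (q ^ 2) * e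

theorem tripleProductCoeff_succ_add_two (q : R) (n j : ℕ) :
    tripleProductCoeff q (n + 1) (j + 2) = q ^ (2 * n + 1) * tripleProductCoeff q n (j + 2)
      + (1 + q ^ (2 * (2 * n + 1))) * tripleProductCoeff q n (j + 1)
      + q ^ (2 * n + 1) * tripleProductCoeff q n j := by
  rcases lt_or_ge (2 * n) j with hj | hj
  · simp [tripleProductCoeff_eq_zero_of_lt, hj, show 2 * n < j + 1 by omega,
      show 2 * n < j + 2 by omega, show 2 * (n + 1) < j + 2 by omega]
  have e1 : (q ^ 2) ^ (j + 2) * q ^ (Nat.dist n (j + 1) ^ 2)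
      = q ^ (2 * n + 1) * q ^ (Nat.dist n (j + 2) ^ 2) := by
    rw [← pow_mul]; exact pow_mul_pow_dist_sq_eq q (by push_cast; ring)
  have e2 : (q ^ 2) ^ (2 * n - j) * q ^ (Nat.dist n (j + 1) ^ 2)
      = q ^ (2 * n + 1) * q ^ (Nat.dist n j ^ 2) := by
    rw [← pow_mul]; exact pow_mul_pow_dist_sq_eq q (by push_cast [hj]; ring)
  simp only [tripleProductCoeff, show 2 * (n + 1) = 2 * n + 2 by ring, gaussBinom_add_two_add_two,
    Nat.dist_add_add_right n 1 (j + 1), Polynomial.eval₂_add,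
    Polynomial.eval₂_mul, Polynomial.eval₂_pow, Polynomial.eval₂_one, Polynomial.eval₂_X]
  linear_combination (gaussBinom (2 * n) (j + 2)).eval₂ (Int.castRingHom R) (q ^ 2) * e1
    + (gaussBinom (2 * n) j).eval₂ (Int.castRingHom R) (q ^ 2) * e2

theorem coeff_tripleProduct (q : R) (n j : ℕ) :
    (tripleProduct q n).coeff j = tripleProductCoeff q n j := by
  induction n generalizing j with
  | zero =>
    rcases j with _ | j
    · simp [tripleProduct, tripleProductCoeff]
    · simp [tripleProduct, tripleProductCoeff, gaussBinom_eq_zero_of_lt, Polynomial.coeff_one]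
  | succ n ih =>
    set P := tripleProduct q n
    have hstep : P * ((1 + Polynomial.C (q ^ (2 * n + 1)) * Polynomial.X)
          * (Polynomial.X + Polynomial.C (q ^ (2 * n + 1))))
        = P * Polynomial.C (q ^ (2 * n + 1))
          + P * Polynomial.C (1 + q ^ (2 * (2 * n + 1))) * Polynomial.X ^ 1
          + P * Polynomial.C (q ^ (2 * n + 1)) * Polynomial.X ^ 2 := by
      simp only [map_add, map_one, map_pow]
      ring
    rw [tripleProduct, prod_range_succ, ← tripleProduct, hstep]
    simp only [Polynomial.coeff_add, Polynomial.coeff_mul_X_pow', Polynomial.coeff_mul_C, ih]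
    rcases j with _ | _ | j
    · simp [tripleProductCoeff_succ_zero, mul_comm]
    · simp only [zero_add, le_refl, ↓reduceIte, tsub_self, Nat.not_ofNat_le_one, add_zero,
        tripleProductCoeff_succ_one]
      ring
    · simp only [le_add_iff_nonneg_left, zero_le, ↓reduceIte, add_tsub_cancel_right,
        Nat.reduceSubDiff, tripleProductCoeff_succ_add_two]
      ring

theorem prod_one_sub_pow_sq_eq_sum_tripleProductCoeff (q : R) (n : ℕ) :
    ∏ k ∈ range n, (1 - q ^ (2 * k + 1)) ^ 2
      = ∑ i ∈ range (2 * n + 1), (-1) ^ (n + i) * tripleProductCoeff q n i := by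
  have hdeg : (tripleProduct q n).natDegree < 2 * n + 1 := Nat.lt_succ_of_le <|
    Polynomial.natDegree_le_iff_coeff_eq_zero.mpr fun N hN ↦ by
      rw [coeff_tripleProduct, tripleProductCoeff_eq_zero_of_lt q hN]
  have heval := Polynomial.eval_eq_sum_range' hdeg (-1)
  simp only [coeff_tripleProduct] at heval
  simp only [tripleProduct, Polynomial.eval_prod] at heval
  simp only [Polynomial.eval_mul, Polynomial.eval_add, Polynomial.eval_one, Polynomial.eval_C,
    Polynomial.eval_X,
    show ∀ a : R, (1 + a * -1) * (-1 + a) = -1 * (1 - a) ^ 2 from fun a ↦ by ring,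
    prod_mul_distrib, prod_const, card_range] at heval
  calc ∏ k ∈ range n, (1 - q ^ (2 * k + 1)) ^ 2
      = (-1) ^ n * ((-1) ^ n * ∏ k ∈ range n, (1 - q ^ (2 * k + 1)) ^ 2) := by
        rw [← mul_assoc, ← pow_add, Even.neg_one_pow ⟨n, rfl⟩, one_mul]
    _ = _ := by
        rw [heval, mul_sum]
        exact sum_congr rfl fun i _ ↦ by ring

theorem sum_range_neg_one_pow_mul_pow_dist_sq (x : R) (n : ℕ) :
    ∑ i ∈ range (2 * n + 1), (-1) ^ (n + i) * x ^ (Nat.dist n i ^ 2)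
      = 1 + 2 * ∑ s ∈ Icc 1 n, (-1) ^ s * x ^ (s ^ 2) := by
  induction n with
  | zero => simp [Nat.dist_self]
  | succ n ih =>
    have hshift : ∀ i, (-1 : R) ^ (n + 1 + (i + 1)) * x ^ (Nat.dist (n + 1) (i + 1) ^ 2)
        = (-1) ^ (n + i) * x ^ (Nat.dist n i ^ 2) := fun i ↦ by
      rw [Nat.dist_add_add_right, show n + 1 + (i + 1) = n + i + 2 by ring, pow_add]
      simp
    rw [show 2 * (n + 1) + 1 = 2 * n + 1 + 1 + 1 by ring, sum_range_succ', sum_range_succ]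
    simp only [hshift, ih, Nat.dist_zero_right,
      Nat.dist_eq_sub_of_le (show n ≤ 2 * n + 1 by omega), show 2 * n + 1 - n = n + 1 by omega,
      sum_Icc_succ_top (show 1 ≤ n + 1 by omega)]
    rw [show n + (2 * n + 1) = 2 * n + (n + 1) by ring, pow_add, Even.neg_one_pow ⟨n, by ring⟩]
    ring

end JacobiTripleProduct

section GaussIdentity

variable {R : Type*} [CommRing R]

/-- `1 + 2 * thetaTail R n` is Gauss's theta series `φ(-q) = ∑_{s ∈ ℤ} (-1)^s q^{s²}` truncated
at `|s| ≤ n`. -/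
noncomputable def thetaTail (R : Type*) [CommRing R] (n : ℕ) : R⟦X⟧ :=
  ∑ s ∈ Icc 1 n, (-1) ^ s * X ^ (s ^ 2)

noncomputable def qSqPochhammer (R : Type*) [CommRing R] (j : ℕ) : R⟦X⟧ :=
  (qPochhammer j).eval₂ (Int.castRingHom R⟦X⟧) (X ^ 2)

theorem qSqPochhammer_eq_prod (j : ℕ) :
    qSqPochhammer R j = ∏ k ∈ Icc 1 j, (1 - X ^ (2 * k)) := by
  simp [qSqPochhammer, qPochhammer, Polynomial.eval₂_finsetProd, pow_mul]

theorem gaussBinom_mul_qSqPochhammer {m i : ℕ} (h : i ≤ m) :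
    (gaussBinom m i).eval₂ (Int.castRingHom R⟦X⟧) (X ^ 2) * qSqPochhammer R i
      * qSqPochhammer R (m - i) = qSqPochhammer R m := by
  simp only [qSqPochhammer, ← Polynomial.eval₂_mul, gaussBinom_mul_qPochhammer h]

theorem isUnit_qSqPochhammer (j : ℕ) : IsUnit (qSqPochhammer R j) := by
  rw [isUnit_iff_constantCoeff, qSqPochhammer_eq_prod, map_prod, prod_eq_one fun k hk ↦ ?_]
  · exact isUnit_one
  have : 2 * k ≠ 0 := by have := (mem_Icc.mp hk).1; omega
  simp [this]

theorem qSqPochhammer_smodEq {a j : ℕ} (h : a ≤ j) :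
    qSqPochhammer R j ≡ qSqPochhammer R a [SMOD Ideal.span {X ^ (2 * a + 2)}] := by
  simp only [qSqPochhammer_eq_prod]
  refine prod_Icc_smodEq_prod_Icc h fun k hk ↦ ?_
  simpa [sub_eq_add_neg] using
    add_X_pow_mul_smodEq (R := R) (show 2 * a + 2 ≤ 2 * k by have := (mem_Ioc.mp hk).1; omega)
      1 (-1)

theorem qSqPochhammer_mul_tripleProductCoeff_X_smodEq {n i : ℕ} (hi : i ≤ 2 * n) :
    qSqPochhammer R n * tripleProductCoeff X n i
      ≡ X ^ (Nat.dist n i ^ 2) [SMOD Ideal.span {X ^ (2 * n + 1)}] := by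
  have hd : Nat.dist n i ≤ n := by
    rcases le_total n i with h | h
    · rw [Nat.dist_eq_sub_of_le h]; omega
    · rw [Nat.dist_eq_sub_of_le_right h]; omega
  have hai := Nat.dist_tri_left' n i
  have hai' := Nat.dist_tri_right n i
  set Q := qSqPochhammer R
  set B : R⟦X⟧ := (gaussBinom (2 * n) i).eval₂ (Int.castRingHom R⟦X⟧) (X ^ 2)
  set d := Nat.dist n i
  set a := n - d
  -- `a = min i (2n - i)`, and `(q²; q²)_j` agrees with `(q²; q²)_a` below degree `2a + 2`
  have hQ : ∀ j, a ≤ j → Q j ≡ Q a [SMOD Ideal.span {X ^ (2 * a + 2)}] :=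
    fun j hj ↦ qSqPochhammer_smodEq hj
  have hprod : B * Q i * Q (2 * n - i) = Q (2 * n) := gaussBinom_mul_qSqPochhammer hi
  have hkey : Q n * B ≡ 1 [SMOD Ideal.span {X ^ (2 * a + 2)}] := by
    obtain ⟨v, hv⟩ : ∃ v, v * (Q i * Q (2 * n - i)) = 1 :=
      ((isUnit_qSqPochhammer i).mul (isUnit_qSqPochhammer (2 * n - i))).exists_left_inv
    have h : Q i * Q (2 * n - i) * (Q n * B) ≡ Q i * Q (2 * n - i) * 1
        [SMOD Ideal.span {X ^ (2 * a + 2)}] := by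
      rw [mul_one, show Q i * Q (2 * n - i) * (Q n * B) = Q n * Q (2 * n) by rw [← hprod]; ring]
      exact ((hQ n (by omega)).mul (hQ (2 * n) (by omega))).trans
        ((hQ i (by omega)).mul (hQ (2 * n - i) (by omega))).symm
    have hv' := SModEq.rfl (x := v).mul h
    rwa [mul_one, ← mul_assoc, hv, one_mul] at hv'
  have hle : 2 * n + 1 ≤ 2 * a + 2 + d ^ 2 := by
    have := two_mul_le_add_sq d 1
    have : d * d = d ^ 2 := (sq d).symm
    omega
  rw [smodEq_span_singleton_iff] at hkey ⊢
  refine (pow_dvd_pow X hle).trans ?_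
  rw [pow_add, show Q n * tripleProductCoeff X n i - X ^ (d ^ 2) = (Q n * B - 1) * X ^ (d ^ 2) by
    simp only [tripleProductCoeff, B, d]; ring]
  exact mul_dvd_mul hkey dvd_rfl

theorem prod_one_add_X_pow_mul_theta_smodEq (n : ℕ) :
    (∏ k ∈ Icc 1 (2 * n), (1 + X ^ k : R⟦X⟧)) * (1 + 2 * thetaTail R n)
      ≡ ∏ k ∈ Icc 1 (2 * n), (1 - X ^ k) [SMOD Ideal.span {X ^ (2 * n + 1)}] := by
  -- `N · (q²; q²)_n D² = (q²; q²)_{2n} D ≡ (q²; q²)_n D = ∏ (1 - q^k)`, with `D = (q; q²)_n`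
  set N := ∏ k ∈ Icc 1 (2 * n), (1 + X ^ k : R⟦X⟧)
  set D : R⟦X⟧ := ∏ k ∈ range n, (1 - X ^ (2 * k + 1)) with hD
  have hM : ∏ k ∈ Icc 1 (2 * n), (1 - X ^ k : R⟦X⟧) = qSqPochhammer R n * D := by
    rw [prod_Icc_two_mul, qSqPochhammer_eq_prod]
  have hNM : N * ∏ k ∈ Icc 1 (2 * n), (1 - X ^ k) = qSqPochhammer R (2 * n) := by
    rw [qSqPochhammer_eq_prod, ← prod_mul_distrib]
    exact prod_congr rfl fun k _ ↦ by ring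
  have htheta : qSqPochhammer R n * D ^ 2 ≡ 1 + 2 * thetaTail R n
      [SMOD Ideal.span {X ^ (2 * n + 1)}] := by
    rw [hD, thetaTail, ← prod_pow, prod_one_sub_pow_sq_eq_sum_tripleProductCoeff,
      ← sum_range_neg_one_pow_mul_pow_dist_sq, mul_sum]
    refine SModEq.sum fun i hi ↦ ?_
    rw [mul_left_comm]
    exact SModEq.rfl.mul (qSqPochhammer_mul_tripleProductCoeff_X_smodEq
      (Nat.lt_succ_iff.mp (mem_range.mp hi)))
  have hQ : qSqPochhammer R (2 * n) ≡ qSqPochhammer R n [SMOD Ideal.span {X ^ (2 * n + 1)}] :=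
    smodEq_X_pow_of_le (by omega) (qSqPochhammer_smodEq (by omega))
  have h := (SModEq.rfl (x := N)).mul htheta.symm
  rw [show N * (qSqPochhammer R n * D ^ 2) = qSqPochhammer R (2 * n) * D by
    rw [← hNM, hM]; ring] at h
  rw [hM]
  exact h.trans (hQ.mul SModEq.rfl)

end GaussIdentity

section Overpartitions

variable {R : Type*} [CommRing R]

noncomputable def fpsOver (R : Type*) [CommRing R] (k : ℕ) : R⟦X⟧ :=
  (1 + X ^ k) * invOfUnit (1 - X ^ k) 1

noncomputable def lambertTerm (R : Type*) [CommRing R] (k : ℕ) : R⟦X⟧ :=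
  X ^ k * invOfUnit (1 - X ^ k) 1

theorem map_fps {k : ℕ} (hk : k ≠ 0) : map (Int.castRingHom R) (fps k) = fpsOver R k := by
  have hinv : map (Int.castRingHom R) (invOfUnit (1 - X ^ k) 1) = invOfUnit (1 - X ^ k) 1 := by
    ext n
    simp only [coeff_map, coeff_invOfUnit_one_sub_X_pow hk]
    split_ifs <;> simp
  simp [fps, fpsOver, hinv]

theorem intCast_coeff_prod_fps_pow (n N : ℕ) (e : ℕ → ℕ) :
    ((coeff n (∏ k ∈ Icc 1 N, fps k ^ e k) : ℤ) : R)
      = coeff n (∏ k ∈ Icc 1 N, fpsOver R k ^ e k) := by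
  rw [← eq_intCast (Int.castRingHom R), ← coeff_map, map_prod]
  refine congrArg _ (prod_congr rfl fun k hk ↦ ?_)
  rw [map_pow, map_fps (by have := (mem_Icc.mp hk).1; omega)]

theorem intCast_pbar (n : ℕ) : (pbar n : R) = coeff n (∏ k ∈ Icc 1 n, fpsOver R k) := by
  simpa [pbar] using intCast_coeff_prod_fps_pow (R := R) n n fun _ ↦ 1

theorem intCast_plbark (K n : ℕ) :
    (plbark K n : R) = coeff n (∏ k ∈ Icc 1 n, fpsOver R k ^ min K k) :=
  intCast_coeff_prod_fps_pow n n (min K)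

theorem fpsOver_eq_one_add_two_mul_lambertTerm {k : ℕ} (hk : k ≠ 0) :
    fpsOver R k = 1 + 2 * lambertTerm R k := by
  rw [fpsOver, lambertTerm]
  linear_combination one_sub_X_pow_mul_invOfUnit (R := R) hk

theorem coeff_lambertTerm {k : ℕ} (hk : k ≠ 0) (n : ℕ) :
    coeff n (lambertTerm R k) = if k ∣ n ∧ n ≠ 0 then 1 else 0 := by
  rw [lambertTerm, coeff_X_pow_mul']
  split_ifs with hkn hd hd
  · rw [coeff_invOfUnit_one_sub_X_pow hk, if_pos ((Nat.dvd_sub_iff_left hkn dvd_rfl).mpr hd.1)]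
  · rw [coeff_invOfUnit_one_sub_X_pow hk,
      if_neg fun h ↦ hd ⟨(Nat.dvd_sub_iff_left hkn dvd_rfl).mp h, by omega⟩]
  · exact absurd (Nat.le_of_dvd (Nat.pos_of_ne_zero hd.2) hd.1) hkn
  · rfl

theorem coeff_lambertTerm_of_not_dvd {k n : ℕ} (hk : k ≠ 0) (h : ¬k ∣ n) :
    coeff n (lambertTerm R k) = 0 := by
  simp [coeff_lambertTerm hk, h]

theorem prod_fpsOver_smodEq {m M : ℕ} (h : m ≤ M) :
    ∏ k ∈ Icc 1 M, fpsOver R k ≡ ∏ k ∈ Icc 1 m, fpsOver R k [SMOD Ideal.span {X ^ (m + 1)}] := by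
  refine prod_Icc_smodEq_prod_Icc h fun k hk ↦ ?_
  have hk := (mem_Ioc.mp hk).1
  rw [fpsOver_eq_one_add_two_mul_lambertTerm (by omega), lambertTerm, mul_left_comm]
  exact add_X_pow_mul_smodEq hk _ _

theorem prod_fpsOver_mul_theta_smodEq (n : ℕ) :
    (∏ k ∈ Icc 1 (2 * n), fpsOver R k) * (1 + 2 * thetaTail R n) ≡ 1
      [SMOD Ideal.span {X ^ (2 * n + 1)}] := by
  set V := ∏ k ∈ Icc 1 (2 * n), invOfUnit (1 - X ^ k : R⟦X⟧) 1
  have hinv : (∏ k ∈ Icc 1 (2 * n), (1 - X ^ k : R⟦X⟧)) * V = 1 := by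
    rw [← prod_mul_distrib]
    exact prod_eq_one fun k hk ↦ one_sub_X_pow_mul_invOfUnit (by have := (mem_Icc.mp hk).1; omega)
  have h := (prod_one_add_X_pow_mul_theta_smodEq (R := R) n).mul (SModEq.rfl (x := V))
  rwa [hinv, mul_right_comm, ← prod_mul_distrib] at h

@[simp]
theorem PowerSeries.coeff_ofNat_mul (c : ℕ) [c.AtLeastTwo] (f : R⟦X⟧) (n : ℕ) :
    coeff n ((no_index (OfNat.ofNat c : R⟦X⟧)) * f) = OfNat.ofNat c * coeff n f := by
  rw [← map_ofNat (C (R := R)), coeff_C_mul]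

theorem PowerSeries.coeff_mul_eq_zero_of_forall {f g : R⟦X⟧} {n : ℕ}
    (h : ∀ a b, a + b = n → coeff a f = 0 ∨ coeff b g = 0) : coeff n (f * g) = 0 := by
  rw [coeff_mul]
  refine sum_eq_zero fun p hp ↦ ?_
  rcases h p.1 p.2 (mem_antidiagonal.mp hp) with h | h <;> simp [h]

theorem coeff_thetaTail_of_not_isSquare {n m : ℕ} (h : ¬IsSquare m) :
    coeff m (thetaTail R n) = 0 := by
  rw [thetaTail, map_sum]
  refine sum_eq_zero fun s _ ↦ ?_
  rw [show ((-1 : R⟦X⟧)) ^ s = C ((-1) ^ s) by simp, coeff_C_mul, coeff_X_pow,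
    if_neg fun hs ↦ h ⟨s, hs.trans (sq s)⟩, mul_zero]

theorem coeff_lambertTerm_two_add_four_eq_zero {m : ℕ} (hm : m % 2 = 1) :
    coeff m (lambertTerm R 2 + lambertTerm R 4) = 0 := by
  rw [map_add, coeff_lambertTerm_of_not_dvd two_ne_zero (by omega),
    coeff_lambertTerm_of_not_dvd four_ne_zero (by omega), add_zero]

theorem coeff_lambertTerm_quadratic_eq_zero {m : ℕ} (hm2 : m % 2 = 1) (hm3 : m % 3 ≠ 0) :
    coeff m (lambertTerm R 3 + lambertTerm R 3 ^ 2 + lambertTerm R 4 + lambertTerm R 4 ^ 2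
      + lambertTerm R 2 * lambertTerm R 4) = 0 := by
  have hG : ∀ {k n : ℕ}, k ≠ 0 → n % k ≠ 0 → coeff n (lambertTerm R k) = 0 :=
    fun hk hn ↦ coeff_lambertTerm_of_not_dvd hk (by omega)
  have hGG : ∀ {k l : ℕ}, k ≠ 0 → l ≠ 0 → (∀ a b, a + b = m → a % k ≠ 0 ∨ b % l ≠ 0) →
      coeff m (lambertTerm R k * lambertTerm R l) = 0 :=
    fun hk hl h ↦ coeff_mul_eq_zero_of_forall fun a b hab ↦ (h a b hab).imp (hG hk) (hG hl)
  rw [map_add, map_add, map_add, map_add, sq, sq, hG three_ne_zero hm3, hG four_ne_zero (by omega),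
    hGG three_ne_zero three_ne_zero (by omega), hGG four_ne_zero four_ne_zero (by omega),
    hGG two_ne_zero four_ne_zero (by omega)]
  simp

theorem coeff_thetaTail_mul_lambertTerm_two_sub_four_eq_zero {n m : ℕ} (hm : m % 4 = 1) :
    coeff m (thetaTail R n * (lambertTerm R 2 - lambertTerm R 4)) = 0 := by
  refine coeff_mul_eq_zero_of_forall fun a b hab ↦ ?_
  by_cases ha : IsSquare a
  · right
    obtain ⟨t, rfl⟩ := ha
    have ht : t * t % 4 = 0 ∨ t * t % 4 = 1 := by
      rcases Nat.even_or_odd' t with ⟨u, rfl | rfl⟩ <;> ring_nf <;> omega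
    rw [map_sub, coeff_lambertTerm two_ne_zero, coeff_lambertTerm four_ne_zero]
    split_ifs <;> first | (exfalso; omega) | simp
  · exact .inl (coeff_thetaTail_of_not_isSquare ha)

end Overpartitions

section ModEight

theorem PowerSeries.eight_eq_zero_zmod8 : (8 : (ZMod 8)⟦X⟧) = 0 := by
  rw [← map_ofNat (C (R := ZMod 8)) 8, show (OfNat.ofNat 8 : ZMod 8) = 0 from rfl, map_zero]

theorem four_mul_sum_sq {ι A : Type*} [CommRing A] (h8 : (8 : A) = 0) (s : Finset ι)
    (f : ι → A) : 4 * (∑ i ∈ s, f i) ^ 2 = ∑ i ∈ s, 4 * f i ^ 2 := by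
  classical
  induction s using Finset.induction_on with
  | empty => simp
  | insert a s ha ih =>
    rw [sum_insert ha, sum_insert ha, ← ih]
    linear_combination (f a * ∑ i ∈ s, f i) * h8

theorem coeff_four_mul_thetaTail_sq_of_odd {n m : ℕ} (hm : Odd m) :
    coeff m (4 * thetaTail (ZMod 8) n ^ 2) = 0 := by
  rw [thetaTail, four_mul_sum_sq eight_eq_zero_zmod8, map_sum]
  refine sum_eq_zero fun s _ ↦ ?_
  rw [mul_pow, ← pow_mul, ← pow_mul, mul_comm s 2, pow_mul, neg_one_sq, one_pow, one_mul,
    coeff_ofNat_mul, coeff_X_pow, if_neg, mul_zero]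
  rintro rfl
  exact Nat.not_even_iff_odd.mpr hm (even_two.mul_left _)

theorem prod_fpsOver_zmod8_smodEq (m : ℕ) :
    ∏ k ∈ Icc 1 m, fpsOver (ZMod 8) k ≡ 1 - 2 * thetaTail (ZMod 8) m + 4 * thetaTail (ZMod 8) m ^ 2
      [SMOD Ideal.span {X ^ (m + 1)}] := by
  set S := thetaTail (ZMod 8) m
  have h := (prod_fpsOver_mul_theta_smodEq (R := ZMod 8) m).mul
    (SModEq.rfl (x := 1 - 2 * S + 4 * S ^ 2))
  rw [mul_assoc, one_mul, show (1 + 2 * S) * (1 - 2 * S + 4 * S ^ 2) = 1 by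
    linear_combination S ^ 3 * eight_eq_zero_zmod8, mul_one] at h
  exact (prod_fpsOver_smodEq (by omega)).symm.trans (smodEq_X_pow_of_le (by omega) h)

theorem intCast_pbar_zmod8 (m : ℕ) : (pbar m : ZMod 8)
    = coeff m (1 - 2 * thetaTail (ZMod 8) m + 4 * thetaTail (ZMod 8) m ^ 2) := by
  rw [intCast_pbar, coeff_eq_of_smodEq (prod_fpsOver_zmod8_smodEq m) (Nat.lt_succ_self m)]

theorem pbar_modEq_zero_of_odd_of_not_isSquare {m : ℕ} (hm : Odd m) (hsq : ¬IsSquare m) :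
    pbar m ≡ 0 [ZMOD 8] := by
  have h0 : m ≠ 0 := by rintro rfl; exact hsq ⟨0, rfl⟩
  refine (ZMod.intCast_eq_intCast_iff _ _ 8).mp ?_
  rw [Int.cast_zero, intCast_pbar_zmod8, map_add, map_sub,
    coeff_four_mul_thetaTail_sq_of_odd hm, coeff_ofNat_mul, coeff_thetaTail_of_not_isSquare hsq,
    coeff_one, if_neg h0]
  simp

theorem fpsOver_zmod8_pow_four {k : ℕ} (hk : k ≠ 0) : fpsOver (ZMod 8) k ^ 4 = 1 := by
  rw [fpsOver_eq_one_add_two_mul_lambertTerm hk]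
  set G := lambertTerm (ZMod 8) k
  linear_combination (G + 3 * G ^ 2 + 4 * G ^ 3 + 2 * G ^ 4) * eight_eq_zero_zmod8

theorem prod_fpsOver_pow_min_five {m : ℕ} (hm : 4 ≤ m) :
    ∏ k ∈ Icc 1 m, fpsOver (ZMod 8) k ^ min 5 k = (∏ k ∈ Icc 1 m, fpsOver (ZMod 8) k)
      * (fpsOver (ZMod 8) 2 * fpsOver (ZMod 8) 3 ^ 2 * fpsOver (ZMod 8) 4 ^ 3) := by
  have hsucc : ∀ k ∈ Icc 1 m, fpsOver (ZMod 8) k ^ min 5 k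
      = fpsOver (ZMod 8) k * fpsOver (ZMod 8) k ^ (min 5 k - 1) := fun k hk ↦ by
    rw [← pow_succ', Nat.sub_add_cancel (by have := (mem_Icc.mp hk).1; omega)]
  have hsplit : ∏ k ∈ Icc 1 m, fpsOver (ZMod 8) k ^ (min 5 k - 1)
      = (∏ k ∈ Icc 1 4, fpsOver (ZMod 8) k ^ (min 5 k - 1))
        * ∏ k ∈ Ioc 4 m, fpsOver (ZMod 8) k ^ (min 5 k - 1) :=
    (prod_Ioc_consecutive _ (Nat.zero_le 4) hm).symm
  have htail : ∏ k ∈ Ioc 4 m, fpsOver (ZMod 8) k ^ (min 5 k - 1) = 1 :=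
    prod_eq_one fun k hk ↦ by
      rw [mem_Ioc] at hk
      rw [show min 5 k - 1 = 4 by omega, fpsOver_zmod8_pow_four (by omega)]
  rw [prod_congr rfl hsucc, prod_mul_distrib, hsplit, htail, mul_one]
  simp [prod_Icc_succ_top, mul_assoc]

theorem fpsOver_two_mul_three_sq_mul_four_cube :
    fpsOver (ZMod 8) 2 * fpsOver (ZMod 8) 3 ^ 2 * fpsOver (ZMod 8) 4 ^ 3
      = 1 + 2 * (lambertTerm (ZMod 8) 2 + lambertTerm (ZMod 8) 4)
        + 4 * (lambertTerm (ZMod 8) 3 + lambertTerm (ZMod 8) 3 ^ 2 + lambertTerm (ZMod 8) 4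
          + lambertTerm (ZMod 8) 4 ^ 2 + lambertTerm (ZMod 8) 2 * lambertTerm (ZMod 8) 4) := by
  simp only [fpsOver_eq_one_add_two_mul_lambertTerm (show (2 : ℕ) ≠ 0 by norm_num),
    fpsOver_eq_one_add_two_mul_lambertTerm (show (3 : ℕ) ≠ 0 by norm_num),
    fpsOver_eq_one_add_two_mul_lambertTerm (show (4 : ℕ) ≠ 0 by norm_num)]
  set a := lambertTerm (ZMod 8) 2
  set b := lambertTerm (ZMod 8) 3
  set c := lambertTerm (ZMod 8) 4
  linear_combination (a * (b + b ^ 2 + c + c ^ 2) + (b + b ^ 2) * c + 2 * (b + b ^ 2) * (c + c ^ 2)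
    + 2 * a * (b + b ^ 2) * c + 4 * a * (b + b ^ 2) * (c + c ^ 2)
    + (1 + 2 * a) * (1 + 4 * (b + b ^ 2)) * (c ^ 2 + c ^ 3)) * eight_eq_zero_zmod8

theorem plbark_five_modEq_pbar {m : ℕ} (hm : m % 12 = 5) : plbark 5 m ≡ pbar m [ZMOD 8] := by
  refine (ZMod.intCast_eq_intCast_iff _ _ 8).mp ?_
  rw [intCast_plbark, intCast_pbar_zmod8, prod_fpsOver_pow_min_five (by omega),
    fpsOver_two_mul_three_sq_mul_four_cube,
    coeff_eq_of_smodEq ((prod_fpsOver_zmod8_smodEq m).mul SModEq.rfl) (Nat.lt_succ_self m)]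
  set S := thetaTail (ZMod 8) m
  set U := lambertTerm (ZMod 8) 2 + lambertTerm (ZMod 8) 4
  set K := lambertTerm (ZMod 8) 3 + lambertTerm (ZMod 8) 3 ^ 2 + lambertTerm (ZMod 8) 4
    + lambertTerm (ZMod 8) 4 ^ 2 + lambertTerm (ZMod 8) 2 * lambertTerm (ZMod 8) 4
  set H := lambertTerm (ZMod 8) 2 - lambertTerm (ZMod 8) 4
  have hE : (1 - 2 * S + 4 * S ^ 2) * (1 + 2 * U + 4 * K)
      = (1 - 2 * S + 4 * S ^ 2) + 2 * U + 4 * (K + S * H) := by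
    linear_combination (-S * lambertTerm (ZMod 8) 2 + S ^ 2 * U - S * K + 2 * S ^ 2 * K)
      * eight_eq_zero_zmod8
  have hU : coeff m U = 0 := coeff_lambertTerm_two_add_four_eq_zero (by omega)
  have hK : coeff m K = 0 := coeff_lambertTerm_quadratic_eq_zero (by omega) (by omega)
  have hSH : coeff m (S * H) = 0 :=
    coeff_thetaTail_mul_lambertTerm_two_sub_four_eq_zero (by omega)
  rw [hE]
  simp only [map_add, coeff_ofNat_mul, hU, hK, hSH, mul_zero, add_zero]

end ModEight

theorem Nat.not_isSquare_of_mod_eight_eq_five {m : ℕ} (hm : m % 8 = 5) : ¬IsSquare m := by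
  rintro ⟨r, rfl⟩
  have h := Nat.mul_mod r r 8
  have : r % 8 < 8 := Nat.mod_lt _ (by norm_num)
  interval_cases r % 8 <;> omega

/-- For all `α ≥ 3`, `β ≥ 1`, `n ≥ 0`, `pl̄₅(2^α·3^β·n + 5) ≡ 0 (mod 8)`. -/
theorem plbark_five_family_mod_eight (α β n : ℕ) (hα : 3 ≤ α) (hβ : 1 ≤ β) :
    plbark 5 (2 ^ α * 3 ^ β * n + 5) ≡ 0 [ZMOD 8] := by
  have h24 : 24 ∣ 2 ^ α * 3 ^ β * n :=
    (Nat.mul_dvd_mul (pow_dvd_pow 2 hα) (pow_dvd_pow 3 hβ) : 2 ^ 3 * 3 ^ 1 ∣ _).mul_right n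
  exact (plbark_five_modEq_pbar (by omega)).trans (pbar_modEq_zero_of_odd_of_not_isSquare
    (Nat.odd_iff.mpr (by omega)) (Nat.not_isSquare_of_mod_eight_eq_five (by omega)))
end
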